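/- In an agent-only gridworld where a vertex v of the modified state complex has link lk(v) failing to be flag, there exist two agents in the state v whose positions p, q ∈ ℤ² satisfy either {|p₁−q₁|,|p₂−q₂|} = {1,2} (a knight move) or |p₁−q₁| = |p₂−q₂| = 2 (a 2-step bishop move). -/

import Mathlib

/-- A cell of the gridworld. -/
abbrev Cell : Type := ℤ × ℤ

/-- Two cells are orthogonally adjacent if they differ by `(±1,0)` or `(0,±1)`,
i.e. their `L¹`-distance is 1. -/
def Adj (c c' : Cell) : Prop :=
  (c.1 - c'.1).natAbs + (c.2 - c'.2).natAbs = 1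

instance (c c' : Cell) : Decidable (Adj c c') := by unfold Adj; infer_instance

/-- Membership of a cell in the `n₁ × n₂` board `{0,…,n₁-1} × {0,…,n₂-1}`. -/
def InBoard (n₁ n₂ : ℤ) (c : Cell) : Prop :=
  0 ≤ c.1 ∧ c.1 < n₁ ∧ 0 ≤ c.2 ∧ c.2 < n₂

/-- A Move generator: an agent at `src` moves to the cell `tgt`. -/
structure Move where
  src : Cell
  tgt : Cell
deriving DecidableEq

/-- The support of a Move: its pair of cells. -/
def Move.sup (m : Move) : Finset Cell := {m.src, m.tgt}

/-- A Move is admissible at a state `S` (the finite set of agent positions) if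
its source is occupied and its target is an unoccupied board cell orthogonally
adjacent to the source. -/
def Move.Adm (n₁ n₂ : ℤ) (S : Finset Cell) (m : Move) : Prop :=
  m.src ∈ S ∧ m.tgt ∉ S ∧ Adj m.src m.tgt ∧ InBoard n₁ n₂ m.tgt

/-- The result of applying a Move. -/
def Move.apply (m : Move) (S : Finset Cell) : Finset Cell :=
  insert m.tgt (S.erase m.src)

/-- The `2 × 2` subgrid with bottom-left corner `a`. -/
def square (a : Cell) : Finset Cell :=
  {(a.1, a.2), (a.1 + 1, a.2), (a.1, a.2 + 1), (a.1 + 1, a.2 + 1)}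

/-- A dance of the agent at `p` on the `2 × 2` subgrid with corner `a` is
admissible at `S` if `p` is an occupied cell of the subgrid, the subgrid lies
on the board, and its other three cells are unoccupied. -/
def DanceAdm (n₁ n₂ : ℤ) (S : Finset Cell) (a p : Cell) : Prop :=
  p ∈ square a ∧ p ∈ S ∧ (∀ d ∈ square a, InBoard n₁ n₂ d) ∧
    ∀ d ∈ square a, d ≠ p → d ∉ S

/-- The two constituent Moves of the dance on `square a` which are admissible
at the current position `p` of the dancing agent. -/
def danceMoves (a p : Cell) : Finset Move :=
  ((square a).filter fun t => Adj p t).image (Move.mk p)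

/-- A finite set `M` of Moves spans a simplex in the link of the state `S` in
the modified state complex iff all its Moves are admissible at `S` and `M`
partitions into blocks which are either single Moves or the pairs of admissible
Moves of admissible dances, such that the supports of the blocks (the 2-cell
support of a single Move, the 4-cell subgrid of a dance) are pairwise
disjoint; i.e. `M` is the set of edges of a corner at `S` of a cube coming
from a commuting set of Moves and dances. -/
def SpansSimplex (n₁ n₂ : ℤ) (S : Finset Cell) (M : Finset Move) : Prop :=
  (∀ m ∈ M, m.Adm n₁ n₂ S) ∧
  ∃ (P : Finset (Finset Move)) (σ : Finset Move → Finset Cell),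
    (∀ m ∈ M, ∃! B, B ∈ P ∧ m ∈ B) ∧
    (∀ B ∈ P, B ⊆ M ∧ B.Nonempty) ∧
    (∀ B ∈ P,
      (∃ m : Move, B = {m} ∧ σ B = m.sup) ∨
      (∃ a p : Cell, DanceAdm n₁ n₂ S a p ∧ B = danceMoves a p ∧
        σ B = square a)) ∧
    (∀ B₁ ∈ P, ∀ B₂ ∈ P, B₁ ≠ B₂ → Disjoint (σ B₁) (σ B₂))

/-- The link of a state `S` in the modified state complex is a flag simplicial
complex: every finite set of admissible Moves which pairwise span 1-simplices
spans a simplex. -/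
def LinkFlag (n₁ n₂ : ℤ) (S : Finset Cell) : Prop :=
  ∀ M : Finset Move, (∀ m ∈ M, m.Adm n₁ n₂ S) →
    (∀ m₁ ∈ M, ∀ m₂ ∈ M, m₁ ≠ m₂ → SpansSimplex n₁ n₂ S {m₁, m₂}) →
    SpansSimplex n₁ n₂ S M

/-- Two agents' positions differ by a knight move. -/
def KnightRel (p q : Cell) : Prop :=
  ((p.1 - q.1).natAbs = 1 ∧ (p.2 - q.2).natAbs = 2) ∨
  ((p.1 - q.1).natAbs = 2 ∧ (p.2 - q.2).natAbs = 1)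

/-- Two agents' positions differ by a 2-step bishop move. -/
def BishopRel (p q : Cell) : Prop :=
  (p.1 - q.1).natAbs = 2 ∧ (p.2 - q.2).natAbs = 2

/-!
Two Moves that span an edge of the link and whose supports meet form a dance, so they share
their source. Hence, in a set `M` of Moves that pairwise span edges, overlapping Moves are the
Moves with a common source, and the blocks of `M` are its fibres over the source map. Such a
fibre is a single Move or the two Moves of a dance, because three Moves out of one cell cannot
be pairwise perpendicular. The supports of two blocks can then only meet at the corner of a
dance square opposite to its dancer: a Move into that corner starts a knight's move away from
the dancer, and two dance squares meeting only in that corner have dancers a 2-step bishop move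
apart.
-/

open Finset

def Move.IsVertical (m : Move) : Prop := m.tgt.1 = m.src.1

/-- The corner of `square a` diagonally opposite to `p`. -/
def oppositeCorner (a p : Cell) : Cell := (2 * a.1 + 1 - p.1, 2 * a.2 + 1 - p.2)

theorem mem_square_iff {a c : Cell} :
    c ∈ square a ↔ (c.1 = a.1 ∨ c.1 = a.1 + 1) ∧ (c.2 = a.2 ∨ c.2 = a.2 + 1) := by
  simp only [square, mem_insert, mem_singleton, Prod.ext_iff]
  omega

theorem Move.mem_sup_iff {m : Move} {c : Cell} : c ∈ m.sup ↔ c = m.src ∨ c = m.tgt := by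
  simp [Move.sup]

theorem Move.src_mem_sup (m : Move) : m.src ∈ m.sup := by simp [Move.sup]

theorem Move.tgt_mem_sup (m : Move) : m.tgt ∈ m.sup := by simp [Move.sup]

theorem Adj.ne {c c' : Cell} (h : Adj c c') : c ≠ c' := by
  rintro rfl
  simp [Adj] at h

theorem KnightRel.ne {p q : Cell} (h : KnightRel p q) : p ≠ q := by
  rintro rfl
  simp [KnightRel] at h

theorem BishopRel.ne {p q : Cell} (h : BishopRel p q) : p ≠ q := by
  rintro rfl
  simp [BishopRel] at h

theorem mem_danceMoves_iff {a p : Cell} {m : Move} :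
    m ∈ danceMoves a p ↔ m.src = p ∧ m.tgt ∈ square a ∧ Adj p m.tgt := by
  constructor
  · simp only [danceMoves, mem_image, mem_filter]
    rintro ⟨t, ⟨ht, hadj⟩, rfl⟩
    exact ⟨rfl, ht, hadj⟩
  · rintro ⟨rfl, ht, hadj⟩
    exact mem_image.mpr ⟨m.tgt, mem_filter.mpr ⟨ht, hadj⟩, rfl⟩

theorem mem_danceMoves_of_pair_eq {a p : Cell} {m₁ m₂ : Move}
    (h : {m₁, m₂} = danceMoves a p) : m₁ ∈ danceMoves a p ∧ m₂ ∈ danceMoves a p :=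
  h ▸ ⟨mem_insert_self _ _, mem_insert_of_mem (mem_singleton_self _)⟩

theorem sup_subset_square {a p : Cell} {m : Move} (hm : m ∈ danceMoves a p)
    (hp : p ∈ square a) : m.sup ⊆ square a := by
  obtain ⟨rfl, ht, -⟩ := mem_danceMoves_iff.mp hm
  intro c hc
  rcases Move.mem_sup_iff.mp hc with rfl | rfl <;> assumption

theorem isVertical_iff_not_isVertical {a p : Cell} {m₁ m₂ : Move}
    (h : {m₁, m₂} = danceMoves a p) (hne : m₁ ≠ m₂) : m₁.IsVertical ↔ ¬m₂.IsVertical := by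
  obtain ⟨h₁, h₂⟩ := mem_danceMoves_of_pair_eq h
  obtain ⟨s₁, t₁⟩ := m₁
  obtain ⟨s₂, t₂⟩ := m₂
  obtain ⟨rfl, ht₁, hadj₁⟩ := mem_danceMoves_iff.mp h₁
  obtain ⟨rfl, ht₂, hadj₂⟩ := mem_danceMoves_iff.mp h₂
  have htne : t₁ ≠ t₂ := by rintro rfl; exact hne rfl
  rw [Ne, Prod.ext_iff] at htne
  simp only [Move.IsVertical, Adj, mem_square_iff] at *
  omega

section OppositeCorner

variable {a p : Cell}

theorem oppositeCorner_mem_square (hp : p ∈ square a) : oppositeCorner a p ∈ square a := by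
  simp only [oppositeCorner, mem_square_iff] at *
  omega

theorem oppositeCorner_ne (a p : Cell) : oppositeCorner a p ≠ p := by
  simp only [oppositeCorner, Ne, Prod.ext_iff]
  omega

theorem exists_mem_sup_of_ne_oppositeCorner (hp : p ∈ square a) {d : Cell}
    (hd : d ∈ square a) (hne : d ≠ oppositeCorner a p) : ∃ m ∈ danceMoves a p, d ∈ m.sup := by
  by_cases hdp : d = p
  · refine ⟨⟨p, (oppositeCorner a p).1, p.2⟩, ?_, hdp ▸ Move.src_mem_sup _⟩
    rw [mem_danceMoves_iff]
    simp only [oppositeCorner, Adj, mem_square_iff, true_and] at hp ⊢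
    omega
  · refine ⟨⟨p, d⟩, ?_, Move.tgt_mem_sup _⟩
    rw [mem_danceMoves_iff]
    simp only [oppositeCorner, Adj, mem_square_iff, Ne, Prod.ext_iff, true_and] at hp hd hne hdp ⊢
    omega

theorem knightRel_of_adj_oppositeCorner (hp : p ∈ square a) {s : Cell}
    (hs : Adj s (oppositeCorner a p)) (hsa : s ∉ square a) : KnightRel s p := by
  simp only [oppositeCorner, Adj, KnightRel, mem_square_iff] at *
  omega

theorem bishopRel_of_square_inter {a' p' : Cell} (hp : p ∈ square a) (hp' : p' ∈ square a')
    (hc : oppositeCorner a p = oppositeCorner a' p')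
    (hinter : ∀ d ∈ square a, d ∈ square a' → d = oppositeCorner a p) : BishopRel p p' := by
  have h₁ := hinter (p.1, (oppositeCorner a p).2)
  have h₂ := hinter ((oppositeCorner a p).1, p.2)
  simp only [oppositeCorner, BishopRel, mem_square_iff, Prod.ext_iff] at *
  omega

end OppositeCorner

section Dance

variable {n₁ n₂ : ℤ} {S : Finset Cell} {a p : Cell}

theorem DanceAdm.adm (hd : DanceAdm n₁ n₂ S a p) {m : Move} (hm : m ∈ danceMoves a p) :
    m.Adm n₁ n₂ S := by
  obtain ⟨rfl, ht, hadj⟩ := mem_danceMoves_iff.mp hm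
  exact ⟨hd.2.1, hd.2.2.2 _ ht hadj.ne.symm, hadj, hd.2.2.1 _ ht⟩

theorem DanceAdm.oppositeCorner_not_mem (hd : DanceAdm n₁ n₂ S a p) :
    oppositeCorner a p ∉ S :=
  hd.2.2.2 _ (oppositeCorner_mem_square hd.1) (oppositeCorner_ne a p)

/-- A Move whose support avoids both Moves of a dance can only enter the dance square through
its opposite corner, and then it starts a knight's move away from the dancer. -/
theorem disjoint_sup_square (hK : ∀ p ∈ S, ∀ q ∈ S, ¬KnightRel p q) {u : Move}
    (hu : u.Adm n₁ n₂ S) (hd : DanceAdm n₁ n₂ S a p)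
    (hdisj : ∀ m ∈ danceMoves a p, Disjoint u.sup m.sup) : Disjoint u.sup (square a) := by
  have eq_corner : ∀ d ∈ square a, d ∈ u.sup → d = oppositeCorner a p := by
    intro d hda hdu
    by_contra hne
    obtain ⟨m, hm, hdm⟩ := exists_mem_sup_of_ne_oppositeCorner hd.1 hda hne
    exact disjoint_left.mp (hdisj m hm) hdu hdm
  rw [disjoint_left]
  intro c hcu hca
  have hc := eq_corner c hca hcu
  have hct : c = u.tgt := (Move.mem_sup_iff.mp hcu).resolve_left fun hcs =>
    hd.oppositeCorner_not_mem (hc ▸ hcs ▸ hu.1)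
  have hadj : Adj u.src (oppositeCorner a p) := hc ▸ hct ▸ hu.2.2.1
  have hsrc : u.src ∉ square a := fun hs =>
    hadj.ne (eq_corner _ hs u.src_mem_sup)
  exact hK _ hu.1 _ hd.2.1 (knightRel_of_adj_oppositeCorner hd.1 hadj hsrc)

theorem eq_oppositeCorner_of_mem_inter (hK : ∀ p ∈ S, ∀ q ∈ S, ¬KnightRel p q) {a' p' : Cell}
    (hd : DanceAdm n₁ n₂ S a p) (hd' : DanceAdm n₁ n₂ S a' p')
    (hdisj : ∀ m ∈ danceMoves a p, ∀ w ∈ danceMoves a' p', Disjoint m.sup w.sup) :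
    ∀ d ∈ square a, d ∈ square a' → d = oppositeCorner a p := by
  intro d hda hda'
  by_contra hne
  obtain ⟨m, hm, hdm⟩ := exists_mem_sup_of_ne_oppositeCorner hd.1 hda hne
  exact disjoint_left.mp (disjoint_sup_square hK (hd.adm hm) hd' (hdisj m hm)) hdm hda'

theorem disjoint_square_square (hK : ∀ p ∈ S, ∀ q ∈ S, ¬KnightRel p q)
    (hB : ∀ p ∈ S, ∀ q ∈ S, ¬BishopRel p q) {a' p' : Cell}
    (hd : DanceAdm n₁ n₂ S a p) (hd' : DanceAdm n₁ n₂ S a' p')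
    (hdisj : ∀ m ∈ danceMoves a p, ∀ w ∈ danceMoves a' p', Disjoint m.sup w.sup) :
    Disjoint (square a) (square a') := by
  have inter := eq_oppositeCorner_of_mem_inter hK hd hd' hdisj
  have inter' := eq_oppositeCorner_of_mem_inter hK hd' hd fun w hw m hm => (hdisj m hm w hw).symm
  rw [disjoint_left]
  intro c hc hc'
  exact hB p hd.2.1 p' hd'.2.1 <| bishopRel_of_square_inter hd.1 hd'.1
    ((inter c hc hc').symm.trans (inter' c hc' hc)) inter

end Dance

open Classical in
noncomputable def blockSupport (n₁ n₂ : ℤ) (S : Finset Cell) (B : Finset Move) : Finset Cell :=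
  if h : ∃ a p, DanceAdm n₁ n₂ S a p ∧ B = danceMoves a p then square h.choose
  else B.biUnion Move.sup

section Blocks

variable {n₁ n₂ : ℤ} {S : Finset Cell}

theorem SpansSimplex.exists_dance {m₁ m₂ : Move} (h : SpansSimplex n₁ n₂ S {m₁, m₂})
    (hne : m₁ ≠ m₂) (hnd : ¬Disjoint m₁.sup m₂.sup) :
    ∃ a p, DanceAdm n₁ n₂ S a p ∧ {m₁, m₂} = danceMoves a p := by
  obtain ⟨-, P, σ, huniq, hsub, hclass, hdisj⟩ := h
  obtain ⟨B₁, ⟨hB₁, hm₁⟩, -⟩ := huniq m₁ (mem_insert_self _ _)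
  obtain ⟨B₂, ⟨hB₂, hm₂⟩, -⟩ := huniq m₂ (mem_insert_of_mem (mem_singleton_self _))
  have sup_subset : ∀ B ∈ P, ∀ m ∈ B, m.sup ⊆ σ B := by
    intro B hB m hm
    rcases hclass B hB with ⟨m', rfl, hσ⟩ | ⟨a, p, hd, rfl, hσ⟩
    · rw [mem_singleton.mp hm, hσ]
    · exact hσ ▸ sup_subset_square hm hd.1
  by_cases hB : B₁ = B₂
  · subst hB
    rcases hclass B₁ hB₁ with ⟨m, rfl, -⟩ | ⟨a, p, hd, rfl, -⟩
    · exact absurd ((mem_singleton.mp hm₁).trans (mem_singleton.mp hm₂).symm) hne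
    · exact ⟨a, p, hd, Subset.antisymm (insert_subset hm₁ (singleton_subset_iff.mpr hm₂))
        (hsub _ hB₁).1⟩
  · exact absurd ((hdisj B₁ hB₁ B₂ hB₂ hB).mono (sup_subset B₁ hB₁ m₁ hm₁)
      (sup_subset B₂ hB₂ m₂ hm₂)) hnd

theorem SpansSimplex.exists_dance_of_src_eq {m₁ m₂ : Move} (h : SpansSimplex n₁ n₂ S {m₁, m₂})
    (hne : m₁ ≠ m₂) (hsrc : m₁.src = m₂.src) :
    ∃ a p, DanceAdm n₁ n₂ S a p ∧ {m₁, m₂} = danceMoves a p :=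
  h.exists_dance hne <| not_disjoint_iff.mpr ⟨m₁.src, m₁.src_mem_sup, hsrc ▸ m₂.src_mem_sup⟩

theorem disjoint_sup_of_src_ne {m₁ m₂ : Move} (h : SpansSimplex n₁ n₂ S {m₁, m₂})
    (hsrc : m₁.src ≠ m₂.src) : Disjoint m₁.sup m₂.sup := by
  by_contra hnd
  obtain ⟨a, p, -, hdm⟩ := h.exists_dance (fun h => hsrc (h ▸ rfl)) hnd
  obtain ⟨h₁, h₂⟩ := mem_danceMoves_of_pair_eq hdm
  exact hsrc ((mem_danceMoves_iff.mp h₁).1.trans (mem_danceMoves_iff.mp h₂).1.symm)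

theorem filter_src_eq_cases {M : Finset Move}
    (hpair : ∀ m₁ ∈ M, ∀ m₂ ∈ M, m₁ ≠ m₂ → SpansSimplex n₁ n₂ S {m₁, m₂})
    {m : Move} (hm : m ∈ M) :
    M.filter (·.src = m.src) = {m} ∨
      ∃ a p, DanceAdm n₁ n₂ S a p ∧ M.filter (·.src = m.src) = danceMoves a p := by
  by_cases hpartner : ∃ m' ∈ M, m'.src = m.src ∧ m' ≠ m
  · obtain ⟨m', hm', hsrc, hne⟩ := hpartner
    obtain ⟨a, p, hd, hdm⟩ :=
      (hpair m hm m' hm' hne.symm).exists_dance_of_src_eq hne.symm hsrc.symm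
    refine Or.inr ⟨a, p, hd, ?_⟩
    rw [← hdm]
    ext x
    simp only [mem_filter, mem_insert, mem_singleton]
    constructor
    · rintro ⟨hx, hxsrc⟩
      by_contra! hxne
      have perp : ∀ y ∈ M, y.src = m.src → x ≠ y → (x.IsVertical ↔ ¬y.IsVertical) := by
        intro y hy hysrc hxy
        obtain ⟨b, q, -, hb⟩ :=
          (hpair x hx y hy hxy).exists_dance_of_src_eq hxy (hxsrc.trans hysrc.symm)
        exact isVertical_iff_not_isVertical hb hxy
      have := isVertical_iff_not_isVertical hdm hne.symm
      have := perp m hm rfl hxne.1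
      have := perp m' hm' hsrc hxne.2
      tauto
    · rintro (rfl | rfl)
      · exact ⟨hm, rfl⟩
      · exact ⟨hm', hsrc⟩
  · push Not at hpartner
    refine Or.inl (eq_singleton_iff_unique_mem.mpr ⟨mem_filter.mpr ⟨hm, rfl⟩, ?_⟩)
    intro x hx
    obtain ⟨hx, hxsrc⟩ := mem_filter.mp hx
    exact hpartner x hx hxsrc

theorem blockSupport_cases {B : Finset Move}
    (hB : (∃ m, B = {m}) ∨ ∃ a p, DanceAdm n₁ n₂ S a p ∧ B = danceMoves a p) :
    (∃ m, B = {m} ∧ blockSupport n₁ n₂ S B = m.sup) ∨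
      ∃ a p, DanceAdm n₁ n₂ S a p ∧ B = danceMoves a p ∧
        blockSupport n₁ n₂ S B = square a := by
  by_cases hdance : ∃ a p, DanceAdm n₁ n₂ S a p ∧ B = danceMoves a p
  · obtain ⟨p, hd, hdm⟩ := hdance.choose_spec
    exact Or.inr ⟨hdance.choose, p, hd, hdm, dif_pos hdance⟩
  · obtain ⟨m, rfl⟩ := hB.resolve_right hdance
    exact Or.inl ⟨m, rfl, (dif_neg hdance).trans singleton_biUnion⟩

theorem disjoint_of_blocks (hK : ∀ p ∈ S, ∀ q ∈ S, ¬KnightRel p q)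
    (hB : ∀ p ∈ S, ∀ q ∈ S, ¬BishopRel p q) {B₁ B₂ : Finset Move} {s₁ s₂ : Finset Cell}
    (h₁ : (∃ m, B₁ = {m} ∧ s₁ = m.sup) ∨
      ∃ a p, DanceAdm n₁ n₂ S a p ∧ B₁ = danceMoves a p ∧ s₁ = square a)
    (h₂ : (∃ m, B₂ = {m} ∧ s₂ = m.sup) ∨
      ∃ a p, DanceAdm n₁ n₂ S a p ∧ B₂ = danceMoves a p ∧ s₂ = square a)
    (hadm₁ : ∀ m ∈ B₁, m.Adm n₁ n₂ S) (hadm₂ : ∀ m ∈ B₂, m.Adm n₁ n₂ S)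
    (hcross : ∀ u ∈ B₁, ∀ w ∈ B₂, Disjoint u.sup w.sup) : Disjoint s₁ s₂ := by
  rcases h₁ with ⟨u, rfl, rfl⟩ | ⟨a, p, hd, rfl, rfl⟩ <;>
    rcases h₂ with ⟨w, rfl, rfl⟩ | ⟨a', p', hd', rfl, rfl⟩
  · exact hcross u (mem_singleton_self u) w (mem_singleton_self w)
  · exact disjoint_sup_square hK (hadm₁ u (mem_singleton_self u)) hd'
      (hcross u (mem_singleton_self u))
  · exact (disjoint_sup_square hK (hadm₂ w (mem_singleton_self w)) hd
      fun m hm => (hcross m hm w (mem_singleton_self w)).symm).symm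
  · exact disjoint_square_square hK hB hd hd' hcross

theorem linkFlag_of_forall_not_knightRel_bishopRel (hK : ∀ p ∈ S, ∀ q ∈ S, ¬KnightRel p q)
    (hB : ∀ p ∈ S, ∀ q ∈ S, ¬BishopRel p q) : LinkFlag n₁ n₂ S := by
  intro M hadm hpair
  set fiber : Move → Finset Move := fun m => M.filter (·.src = m.src)
  have mem_fiber : ∀ {x m}, x ∈ fiber m ↔ x ∈ M ∧ x.src = m.src := mem_filter
  have block_cases := fun x (hx : x ∈ M) =>
    blockSupport_cases (S := S) ((filter_src_eq_cases hpair hx).imp_left fun h => ⟨x, h⟩)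
  refine ⟨hadm, M.image fiber, blockSupport n₁ n₂ S, ?_, ?_, ?_, ?_⟩
  · intro m hm
    refine ⟨fiber m, ⟨mem_image_of_mem fiber hm, mem_fiber.mpr ⟨hm, rfl⟩⟩, ?_⟩
    rintro _ ⟨hBP, hmB⟩
    obtain ⟨x, -, rfl⟩ := mem_image.mp hBP
    simp only [fiber, (mem_fiber.mp hmB).2]
  · intro _ hBP
    obtain ⟨x, hx, rfl⟩ := mem_image.mp hBP
    exact ⟨filter_subset _ M, x, mem_fiber.mpr ⟨hx, rfl⟩⟩
  · intro _ hBP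
    obtain ⟨x, hx, rfl⟩ := mem_image.mp hBP
    exact block_cases x hx
  · intro _ hB₁ _ hB₂ hne
    obtain ⟨x, hx, rfl⟩ := mem_image.mp hB₁
    obtain ⟨y, hy, rfl⟩ := mem_image.mp hB₂
    have hadm_fiber : ∀ z, ∀ m ∈ fiber z, m.Adm n₁ n₂ S := fun z m hm =>
      hadm m (mem_fiber.mp hm).1
    refine disjoint_of_blocks hK hB (block_cases x hx) (block_cases y hy)
      (hadm_fiber x) (hadm_fiber y) fun u hu w hw => ?_
    obtain ⟨hu, hux⟩ := mem_fiber.mp hu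
    obtain ⟨hw, hwy⟩ := mem_fiber.mp hw
    have hsrc : u.src ≠ w.src := fun h => hne (by simp only [fiber, ← hux, ← hwy, h])
    exact disjoint_sup_of_src_ne (hpair u hu w hw fun h => hsrc (h ▸ rfl)) hsrc

end Blocks

theorem link_failure_knight_or_bishop_general (n₁ n₂ : ℤ) (S : Finset Cell)
    (hfail : ¬ LinkFlag n₁ n₂ S) :
    ∃ p ∈ S, ∃ q ∈ S, p ≠ q ∧ (KnightRel p q ∨ BishopRel p q) := by
  by_contra! hrel
  exact hfail <| linkFlag_of_forall_not_knightRel_bishopRel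
    (fun p hp q hq hpq => (hrel p hp q hq hpq.ne).1 hpq)
    (fun p hp q hq hpq => (hrel p hp q hq hpq.ne).2 hpq)

/-- if the link of a state `v` of the modified state complex of
an agent-only gridworld fails to be flag, then two of the agents of `v` are
separated by a knight move or a 2-step bishop move. -/
theorem link_failure_knight_or_bishop (n₁ n₂ : ℤ) (S : Finset Cell)
    (hS : ∀ c ∈ S, InBoard n₁ n₂ c) (hfail : ¬ LinkFlag n₁ n₂ S) :
    ∃ p ∈ S, ∃ q ∈ S, p ≠ q ∧ (KnightRel p q ∨ BishopRel p q) :=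
  link_failure_knight_or_bishop_general n₁ n₂ S hfail
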